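/- arXiv:1606.07474 — 5 statements merged into one kernel-verified Lean document; each statement's English description precedes it below -/
import Mathlib

section
/- For an n×n matrix A over ℂ and a random vector X ∈ ℂⁿ whose coordinates are independent and uniformly distributed on the unit circle {z : |z| = 1}, the permanent of A equals the expectation E[∏_{i=1}^n (conj(X_i) · Y_i)], where Y = A X. -/
open MeasureTheory

/-- The permanent of a complex square matrix. -/
noncomputable def perm {n : ℕ} (A : Matrix (Fin n) (Fin n) ℂ) : ℂ :=
  ∑ σ : Equiv.Perm (Fin n), ∏ i, A i (σ i)

/-- The operator 2-norm of a complex square matrix. -/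
noncomputable def opNorm {n : ℕ} (A : Matrix (Fin n) (Fin n) ℂ) : ℝ :=
  ‖LinearMap.toContinuousLinearMap (Matrix.toEuclideanLin A)‖

/-- Uniform probability measure parametrizing `n` i.i.d. points of the unit circle. -/
noncomputable def circleMeasure (n : ℕ) : Measure (Fin n → ℝ) :=
  Measure.pi fun _ => volume.restrict (Set.Icc 0 1)

/-- The random vector with i.i.d. coordinates uniform on the unit circle. -/
noncomputable def Xc {n : ℕ} (θ : Fin n → ℝ) : Fin n → ℂ :=
  fun i => Complex.exp (2 * Real.pi * Complex.I * (θ i))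

/-!
Expanding the product, `∏ i, conj (X i) * (A X) i = ∑ f, (∏ i, A i (f i)) * ∏ i, conj (X i) * X (f i)`
over all maps `f : Fin n → Fin n`. Since `|X j| = 1`, the last product is `∏ j, X j ^ (c j - 1)`
where `c j` is the size of the fibre `f⁻¹(j)`, and by independence its expectation is
`∏ j, E[X j ^ (c j - 1)]`, which is `1` if every fibre is a singleton and `0` otherwise.
Only the permutations survive.
-/

open Finset Function ComplexConjugate Real Complex Matrix

theorem Fintype.prod_comp_eq_prod_pow_card_fiber {ι κ M : Type*} [Fintype ι] [Fintype κ]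
    [DecidableEq κ] [CommMonoid M] (f : ι → κ) (x : κ → M) :
    ∏ i, x (f i) = ∏ j, x j ^ #{i | f i = j} := by
  rw [← Finset.prod_fiberwise' univ f x]
  exact Finset.prod_congr rfl fun j _ => prod_const _

theorem Function.bijective_iff_card_fiber_eq_one {α β : Type*} [Fintype α] [DecidableEq β]
    (f : α → β) : Bijective f ↔ ∀ b, #{a | f a = b} = 1 := by
  simp only [bijective_iff_existsUnique, Fintype.existsUnique_iff_card_one]

theorem Fintype.sum_ite_bijective {α M : Type*} [Fintype α] [DecidableEq α] [AddCommMonoid M]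
    [DecidablePred (Bijective : (α → α) → Prop)] (g : (α → α) → M) :
    ∑ f : α → α, (if Bijective f then g f else 0) = ∑ σ : Equiv.Perm α, g σ := by
  rw [← sum_filter, Finset.sum_subtype _ fun f => mem_filter_univ f]
  exact Fintype.sum_equiv Equiv.bijectiveEquiv _ _ fun _ => rfl

theorem Matrix.prod_mul_mulVec_eq_sum {ι R : Type*} [Fintype ι] [DecidableEq ι] [CommSemiring R]
    (A : Matrix ι ι R) (c x : ι → R) :
    ∏ i, c i * (A *ᵥ x) i = ∑ f : ι → ι, (∏ i, A i (f i)) * ∏ i, c i * x (f i) := by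
  simp_rw [Matrix.mulVec, dotProduct, mul_sum, Fintype.prod_sum, ← prod_mul_distrib]
  exact sum_congr rfl fun f _ => prod_congr rfl fun i _ => by ring

noncomputable def circleCharacter (m : ℤ) (t : ℝ) : ℂ :=
  exp (2 * π * I * m * t)

theorem continuous_circleCharacter (m : ℤ) : Continuous (circleCharacter m) := by
  unfold circleCharacter
  fun_prop

theorem integral_Icc_circleCharacter (m : ℤ) :
    ∫ t in Set.Icc (0 : ℝ) 1, circleCharacter m t = if m = 0 then 1 else 0 := by
  unfold circleCharacter
  split_ifs with hm
  · simp [hm]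
  have hc : 2 * π * I * m ≠ 0 := by simp [pi_ne_zero, I_ne_zero, hm]
  have h_period : exp (2 * π * I * m) = 1 := by
    rw [← exp_int_mul_two_pi_mul_I m]
    ring_nf
  rw [integral_Icc_eq_integral_Ioc, ← intervalIntegral.integral_of_le zero_le_one,
    integral_exp_mul_complex hc]
  simp [h_period]

theorem conj_exp_mul_exp_pow_eq_circleCharacter (t : ℝ) (c : ℕ) :
    conj (exp (2 * π * I * t)) * exp (2 * π * I * t) ^ c = circleCharacter (c - 1) t := by
  rw [← exp_conj, ← Complex.exp_nat_mul, ← Complex.exp_add, circleCharacter]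
  congr 1
  simp only [map_mul, conj_I, conj_ofReal, map_ofNat]
  push_cast
  ring

section CircleMeasure

variable {n : ℕ}

theorem prod_conj_Xc_mul_Xc_comp (f : Fin n → Fin n) (θ : Fin n → ℝ) :
    ∏ i, conj (Xc θ i) * Xc θ (f i) = ∏ j, circleCharacter (#{i | f i = j} - 1) (θ j) := by
  rw [prod_mul_distrib, Fintype.prod_comp_eq_prod_pow_card_fiber f (Xc θ), ← prod_mul_distrib]
  exact Finset.prod_congr rfl fun j _ => conj_exp_mul_exp_pow_eq_circleCharacter (θ j) _

theorem integrable_prod_conj_Xc_mul_Xc_comp (f : Fin n → Fin n) :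
    Integrable (fun θ => ∏ i, conj (Xc θ i) * Xc θ (f i)) (circleMeasure n) := by
  simp_rw [prod_conj_Xc_mul_Xc_comp]
  exact Integrable.fintype_prod fun j => (continuous_circleCharacter _).integrableOn_Icc

theorem integral_prod_conj_Xc_mul_Xc_comp [DecidablePred (Bijective : (Fin n → Fin n) → Prop)]
    (f : Fin n → Fin n) :
    ∫ θ, ∏ i, conj (Xc θ i) * Xc θ (f i) ∂circleMeasure n = if Bijective f then 1 else 0 := by
  simp_rw [prod_conj_Xc_mul_Xc_comp, circleMeasure]
  rw [integral_fintype_prod_eq_prod fun j => circleCharacter (#{i | f i = j} - 1)]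
  simp_rw [integral_Icc_circleCharacter, sub_eq_zero, Nat.cast_eq_one, Fintype.prod_boole]
  congr 1
  exact propext (bijective_iff_card_fiber_eq_one f).symm

end CircleMeasure

/-- Glynn estimator identity over ℂ: the permanent equals the expectation of
`∏ i, conj (X i) * (A X) i` for X i.i.d. uniform on the unit circle. -/
theorem glynn_identity_complex {n : ℕ} (A : Matrix (Fin n) (Fin n) ℂ) :
    perm A =
      ∫ θ, (∏ i, (starRingEnd ℂ) (Xc θ i) * (A.mulVec (Xc θ)) i) ∂(circleMeasure n) := by
  classical
  simp_rw [prod_mul_mulVec_eq_sum]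
  rw [integral_finsetSum _ fun f _ => (integrable_prod_conj_Xc_mul_Xc_comp f).const_mul _]
  simp_rw [integral_const_mul, integral_prod_conj_Xc_mul_Xc_comp, mul_ite, mul_one, mul_zero,
    Fintype.sum_ite_bijective]
  rfl
end

section
/- For an n×n real matrix A and a random vector X chosen uniformly from {-1,1}ⁿ, the permanent of A equals E[∏_{i=1}^n X_i · (AX)_i]. -/
open MeasureTheory Finset

/-- The permanent of a real square matrix. -/
noncomputable def permR {n : ℕ} (A : Matrix (Fin n) (Fin n) ℝ) : ℝ :=
  ∑ σ : Equiv.Perm (Fin n), ∏ i, A i (σ i)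

/-- The `±1` vector associated to `ε : Fin n → Bool`. -/
def Xpm {n : ℕ} (ε : Fin n → Bool) : Fin n → ℝ :=
  fun i => if ε i then 1 else -1

lemma glynn_aux1 {n : ℕ} (e : Fin n → ℕ) :
    ∑ ε : Fin n → Bool, ∏ j, (Xpm ε j) ^ (e j) = ∏ j, ((1:ℝ) + (-1) ^ (e j)) := by
  have := Finset.prod_univ_sum (fun _ : Fin n => (univ : Finset Bool))
    (fun j b => ((if b then (1:ℝ) else -1)) ^ (e j))
  rw [Fintype.piFinset_univ] at this
  rw [show (fun (ε : Fin n → Bool) => ∏ j, (Xpm ε j) ^ (e j))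
      = fun ε => ∏ j, ((if ε j then (1:ℝ) else -1)) ^ (e j) from rfl, ← this]
  refine Finset.prod_congr rfl fun j _ => ?_
  simp [Fintype.sum_bool, add_comm]

lemma glynn_fiber {n : ℕ} (ε : Fin n → Bool) (f : Fin n → Fin n) :
    ∏ i, Xpm ε (f i) = ∏ j, (Xpm ε j) ^ (#{i ∈ univ | f i = j}) := by
  rw [← Finset.prod_fiberwise' univ f (Xpm ε)]
  refine Finset.prod_congr rfl fun j _ => ?_
  rw [Finset.prod_const]

lemma glynn_S {n : ℕ} (f : Fin n → Fin n) :
    ∑ ε : Fin n → Bool, ∏ i, Xpm ε i * Xpm ε (f i)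
      = if Function.Bijective f then (2:ℝ)^n else 0 := by
  set c : Fin n → ℕ := fun j => #{i ∈ univ | f i = j} with hc
  have key : ∀ ε : Fin n → Bool, ∏ i, Xpm ε i * Xpm ε (f i)
      = ∏ j, (Xpm ε j) ^ (1 + c j) := by
    intro ε
    rw [Finset.prod_mul_distrib, glynn_fiber ε f]
    rw [← Finset.prod_mul_distrib]
    refine Finset.prod_congr rfl fun j _ => ?_
    rw [pow_add, pow_one]
  simp_rw [key]
  rw [glynn_aux1]
  by_cases hb : Function.Bijective f
  · have hcj : ∀ j, c j = 1 := by
      intro j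
      have hone : univ.filter (fun i => f i = j) = ({(Equiv.ofBijective f hb).symm j} : Finset (Fin n)) := by
        ext i
        simp only [Finset.mem_filter, Finset.mem_univ, true_and, Finset.mem_singleton]
        constructor
        · intro h
          have : f i = f ((Equiv.ofBijective f hb).symm j) := by
            rw [h]; exact ((Equiv.ofBijective f hb).apply_symm_apply j).symm
          exact hb.1 this
        · intro h
          rw [h]; exact (Equiv.ofBijective f hb).apply_symm_apply j
      show #(filter (fun i => f i = j) univ) = 1
      rw [hone, Finset.card_singleton]
    simp only [hb, if_true]
    rw [Finset.prod_congr rfl (fun j _ => by rw [hcj j])]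
    norm_num
  · simp only [hb, if_false]
    have : ¬ Function.Surjective f := fun h =>
      hb ((Finite.surjective_iff_bijective).mp h)
    simp only [Function.Surjective, not_forall, not_exists] at this
    obtain ⟨j, hj⟩ := this
    apply Finset.prod_eq_zero (Finset.mem_univ j)
    have : c j = 0 := by
      rw [hc]
      simp only [Finset.card_eq_zero, Finset.filter_eq_empty_iff]
      intro i _
      exact hj i
    rw [this]
    norm_num

/-- Real Glynn estimator identity: `perm A = E[∏ i, X_i (AX)_i]` for X uniform on
`{-1,1}^n`. -/
theorem glynn_identity_real {n : ℕ} (A : Matrix (Fin n) (Fin n) ℝ) :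
    permR A =
      (∑ ε : Fin n → Bool, ∏ i, Xpm ε i * (A.mulVec (Xpm ε)) i) / 2 ^ n := by
  rw [eq_div_iff (by positivity : ((2:ℝ)) ^ n ≠ 0)]
  symm
  have step1 : ∀ ε : Fin n → Bool,
      ∏ i, Xpm ε i * (A.mulVec (Xpm ε)) i
        = ∑ f : Fin n → Fin n, ∏ i, Xpm ε i * A i (f i) * Xpm ε (f i) := by
    intro ε
    have h1 : ∀ i : Fin n, Xpm ε i * (A.mulVec (Xpm ε)) i
        = ∑ j, Xpm ε i * A i j * Xpm ε j := by
      intro i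
      simp only [Matrix.mulVec, dotProduct, Finset.mul_sum]
      exact Finset.sum_congr rfl fun j _ => by ring
    rw [Finset.prod_congr rfl fun i _ => h1 i]
    have := Finset.prod_univ_sum (fun _ : Fin n => (Finset.univ : Finset (Fin n)))
      (fun i j => Xpm ε i * A i j * Xpm ε j)
    rwa [Fintype.piFinset_univ] at this
  calc ∑ ε : Fin n → Bool, ∏ i, Xpm ε i * (A.mulVec (Xpm ε)) i
      = ∑ ε : Fin n → Bool, ∑ f : Fin n → Fin n,
          ∏ i, Xpm ε i * A i (f i) * Xpm ε (f i) := by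
        exact Finset.sum_congr rfl fun ε _ => step1 ε
    _ = ∑ f : Fin n → Fin n, ∑ ε : Fin n → Bool,
          ∏ i, Xpm ε i * A i (f i) * Xpm ε (f i) := Finset.sum_comm
    _ = ∑ f : Fin n → Fin n, (∏ i, A i (f i)) *
          (if Function.Bijective f then (2:ℝ)^n else 0) := by
        refine Finset.sum_congr rfl fun f _ => ?_
        rw [← glynn_S f, Finset.mul_sum]
        refine Finset.sum_congr rfl fun ε _ => ?_
        rw [← Finset.prod_mul_distrib]
        exact Finset.prod_congr rfl fun i _ => by ring
    _ = ∑ f ∈ Finset.univ.filter Function.Bijective,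
          (∏ i, A i (f i)) * (2:ℝ)^n := by
        rw [Finset.sum_filter]
        exact Finset.sum_congr rfl fun f _ => by split <;> simp
    _ = ∑ σ : Equiv.Perm (Fin n), (∏ i, A i (σ i)) * (2:ℝ)^n := by
        refine (Finset.sum_bij (fun (σ : Equiv.Perm (Fin n)) _ => (σ : Fin n → Fin n))
          ?_ ?_ ?_ ?_).symm
        · intro σ _
          exact Finset.mem_filter.mpr ⟨Finset.mem_univ _, σ.bijective⟩
        · intro σ _ τ _ h
          exact Equiv.coe_fn_injective h
        · intro f hf
          exact ⟨Equiv.ofBijective f (Finset.mem_filter.mp hf).2, Finset.mem_univ _, rfl⟩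
        · intro σ _
          rfl
    _ = permR A * 2 ^ n := by
        rw [permR, Finset.sum_mul]
end

section
/- For any n×n matrix A over ℂ, |perm(A)| ≤ ‖A‖₂ⁿ, where ‖A‖₂ is the operator 2-norm of A. -/
open MeasureTheory

/-!
Gurvits' argument, discretised. Let `ω` be a primitive `(n+1)`-th root of unity and let `x` range
over the `(n+1)ⁿ` vectors whose entries are powers of `ω`. Expanding `∏ᵢ (Ax)ᵢ / ∏ᵢ xᵢ` over maps
`f`, the term of `f` is `∏ᵢ A i (f i)` times `∏ⱼ xⱼ ^ (|f⁻¹(j)| - 1)`. The exponents lie strictly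
between `-(n+1)` and `n+1`, so averaging over `x` kills every term unless all fibres of `f` are
singletons, i.e. `f` is a permutation: `perm A` is the average of `∏ᵢ (Ax)ᵢ / ∏ᵢ xᵢ`. Each of these
has modulus `∏ᵢ |(Ax)ᵢ| ≤ (‖Ax‖² / n) ^ (n / 2) ≤ ‖A‖ⁿ` by AM-GM, because `‖x‖² = n`.
-/

open Finset Function
open scoped Matrix Matrix.Norms.L2Operator

theorem Real.prod_le_mean_pow_card {ι : Type*} [Fintype ι] (z : ι → ℝ) (hz : ∀ i, 0 ≤ z i) :
    ∏ i, z i ≤ ((∑ i, z i) / Fintype.card ι) ^ Fintype.card ι := by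
  set n := Fintype.card ι
  rcases Nat.eq_zero_or_pos n with hn | hn
  · simp [hn, Fintype.card_eq_zero_iff.mp hn]
  have hmean := Real.geom_mean_le_arith_mean_weighted univ (fun _ => (n : ℝ)⁻¹) z
    (fun _ _ => by positivity) (by simp [n, hn.ne']) (fun i _ => hz i)
  calc ∏ i, z i = (∏ i, z i ^ (n : ℝ)⁻¹) ^ n := by
        rw [← Finset.prod_pow]
        exact Finset.prod_congr rfl fun i _ => (Real.rpow_inv_natCast_pow (hz i) hn.ne').symm
    _ ≤ (∑ i, (n : ℝ)⁻¹ * z i) ^ n :=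
        pow_le_pow_left₀ (Finset.prod_nonneg fun i _ => Real.rpow_nonneg (hz i) _) hmean n
    _ = ((∑ i, z i) / n) ^ n := by rw [← Finset.mul_sum, inv_mul_eq_div]

theorem Fintype.prod_comp_div_prod {ι κ G₀ : Type*} [Fintype ι] [Fintype κ] [DecidableEq κ]
    [CommGroupWithZero G₀] (f : ι → κ) (x : κ → G₀) (hx : ∀ j, x j ≠ 0) :
    (∏ i, x (f i)) / ∏ j, x j = ∏ j, x j ^ ((#{i | f i = j} : ℤ) - 1) := by
  rw [← Finset.prod_fiberwise' univ f x, ← Finset.prod_div_distrib]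
  refine Finset.prod_congr rfl fun j _ => ?_
  rw [Finset.prod_const, zpow_sub₀ (hx j), zpow_natCast, zpow_one]

theorem forall_card_fiber_eq_one_iff_bijective {α β : Type*} [Fintype α] [DecidableEq β]
    (f : α → β) : (∀ b, #{a | f a = b} = 1) ↔ Bijective f := by
  simp_rw [bijective_iff_existsUnique, Fintype.existsUnique_iff_card_one]

theorem Matrix.permanent_eq_sum_bijective {ι R : Type*} [Fintype ι] [DecidableEq ι]
    [CommSemiring R] (A : Matrix ι ι R) :
    A.permanent = ∑ f : ι → ι with Bijective f, ∏ i, A (f i) i := by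
  exact Finset.sum_bij' (fun σ _ => σ) (fun f hf => Equiv.ofBijective f (by simpa using hf))
    (fun σ _ => by simp) (by simp) (by simp) (by simp) (by simp)

section RootsOfUnity

variable {K : Type*} [Field K] {ω : K} {N : ℕ}

theorem IsPrimitiveRoot.sum_zpow_pow_eq_ite (hω : IsPrimitiveRoot ω N) (t : ℤ) :
    ∑ s : Fin N, (ω ^ t) ^ (s : ℕ) = if (N : ℤ) ∣ t then (N : K) else 0 := by
  rw [Fin.sum_univ_eq_sum_range (fun s => (ω ^ t) ^ s)]
  split_ifs with ht
  · simp [(hω.zpow_eq_one_iff_dvd t).mpr ht]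
  · have hpow : (ω ^ t) ^ N = 1 := by
      rw [← zpow_natCast, ← zpow_mul, mul_comm, zpow_mul, zpow_natCast, hω.pow_eq_one, one_zpow]
    rw [geom_sum_eq (mt (hω.zpow_eq_one_iff_dvd t).mp ht), hpow, sub_self, zero_div]

variable {ι : Type*} [Fintype ι] [DecidableEq ι]

theorem IsPrimitiveRoot.sum_prod_comp_div_prod (hω : IsPrimitiveRoot ω N)
    (hN : Fintype.card ι < N) (f : ι → ι) :
    ∑ k : ι → Fin N, (∏ i, ω ^ (k (f i) : ℕ)) / ∏ i, ω ^ (k i : ℕ) =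
      if Bijective f then (N : K) ^ Fintype.card ι else 0 := by
  set c : ι → ℕ := fun j => #{i | f i = j}
  have hω0 : ω ≠ 0 := hω.ne_zero (by omega)
  have hdvd : ∀ j, (N : ℤ) ∣ (c j - 1) ↔ c j = 1 := by
    intro j
    have hc : c j ≤ Fintype.card ι := Finset.card_filter_le _ _
    have hι : 0 < Fintype.card ι := Fintype.card_pos_iff.mpr ⟨j⟩
    refine ⟨fun h => ?_, fun h => by simp [h]⟩
    have h0 := Int.eq_zero_of_abs_lt_dvd h (abs_lt.mpr ⟨by omega, by omega⟩)
    omega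
  calc ∑ k : ι → Fin N, (∏ i, ω ^ (k (f i) : ℕ)) / ∏ i, ω ^ (k i : ℕ)
      = ∑ k : ι → Fin N, ∏ j, (ω ^ ((c j : ℤ) - 1)) ^ (k j : ℕ) := by
        refine Finset.sum_congr rfl fun k _ => ?_
        rw [Fintype.prod_comp_div_prod f (fun j => ω ^ (k j : ℕ)) fun j => pow_ne_zero _ hω0]
        refine Finset.prod_congr rfl fun j _ => ?_
        rw [← zpow_natCast, ← zpow_natCast, ← zpow_mul, ← zpow_mul, mul_comm]
    _ = ∏ j, ∑ s : Fin N, (ω ^ ((c j : ℤ) - 1)) ^ (s : ℕ) := by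
        rw [Fintype.prod_sum]
    _ = ∏ j, if c j = 1 then (N : K) else 0 := by
        simp_rw [hω.sum_zpow_pow_eq_ite, hdvd]
    _ = if Bijective f then (N : K) ^ Fintype.card ι else 0 := by
        by_cases hf : Bijective f
        · rw [if_pos hf]
          simp only [c, (forall_card_fiber_eq_one_iff_bijective f).mpr hf, if_true, prod_const,
            card_univ]
        · obtain ⟨j, hj⟩ := not_forall.mp (mt (forall_card_fiber_eq_one_iff_bijective f).mp hf)
          rw [if_neg hf]
          exact Finset.prod_eq_zero (Finset.mem_univ j) (if_neg hj)

theorem IsPrimitiveRoot.sum_prod_mulVec_div_prod (hω : IsPrimitiveRoot ω N)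
    (hN : Fintype.card ι < N) (A : Matrix ι ι K) :
    ∑ k : ι → Fin N, (∏ i, (A *ᵥ fun j => ω ^ (k j : ℕ)) i) / ∏ i, ω ^ (k i : ℕ) =
      (N : K) ^ Fintype.card ι * A.permanent := by
  calc ∑ k : ι → Fin N, (∏ i, (A *ᵥ fun j => ω ^ (k j : ℕ)) i) / ∏ i, ω ^ (k i : ℕ)
      = ∑ k : ι → Fin N, ∑ f : ι → ι,
          (∏ i, A i (f i)) * ((∏ i, ω ^ (k (f i) : ℕ)) / ∏ i, ω ^ (k i : ℕ)) := by
        refine Finset.sum_congr rfl fun k _ => ?_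
        simp only [Matrix.mulVec, dotProduct, Fintype.prod_sum, Finset.sum_div,
          Finset.prod_mul_distrib, mul_div_assoc]
    _ = ∑ f : ι → ι, (∏ i, A i (f i)) * if Bijective f then (N : K) ^ Fintype.card ι else 0 := by
        rw [Finset.sum_comm]
        simp_rw [← Finset.mul_sum, hω.sum_prod_comp_div_prod hN]
    _ = (N : K) ^ Fintype.card ι * A.permanent := by
        rw [← Matrix.permanent_transpose, Matrix.permanent_eq_sum_bijective, Finset.mul_sum,
          Finset.sum_filter]
        exact Finset.sum_congr rfl fun f _ => by split_ifs <;> simp [mul_comm]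

end RootsOfUnity

section L2Norm

variable {𝕜 : Type*} [RCLike 𝕜] {m n : Type*} [Fintype m] [Fintype n] [DecidableEq n]

theorem Matrix.sum_norm_mulVec_sq_le (A : Matrix m n 𝕜) (x : n → 𝕜) :
    ∑ i, ‖(A *ᵥ x) i‖ ^ 2 ≤ ‖A‖ ^ 2 * ∑ j, ‖x j‖ ^ 2 := by
  have h := A.l2_opNorm_mulVec (WithLp.toLp 2 x)
  rw [← sq_le_sq₀ (norm_nonneg _) (by positivity), mul_pow] at h
  simpa [EuclideanSpace.norm_sq_eq] using h

theorem Matrix.norm_prod_mulVec_le (A : Matrix n n 𝕜) (x : n → 𝕜) (hx : ∀ j, ‖x j‖ = 1) :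
    ‖∏ i, (A *ᵥ x) i‖ ≤ ‖A‖ ^ Fintype.card n := by
  set d := Fintype.card n
  have hsum : ∑ i, ‖(A *ᵥ x) i‖ ^ 2 ≤ ‖A‖ ^ 2 * d := by
    simpa [hx, d] using A.sum_norm_mulVec_sq_le x
  rw [← sq_le_sq₀ (norm_nonneg _) (by positivity), norm_prod, ← Finset.prod_pow, ← pow_mul,
    mul_comm, pow_mul]
  calc ∏ i, ‖(A *ᵥ x) i‖ ^ 2 ≤ ((∑ i, ‖(A *ᵥ x) i‖ ^ 2) / d) ^ d :=
        Real.prod_le_mean_pow_card _ fun i => by positivity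
    _ ≤ (‖A‖ ^ 2) ^ d :=
        pow_le_pow_left₀ (by positivity) (div_le_of_le_mul₀ (by positivity) (by positivity) hsum) d

end L2Norm

theorem Matrix.norm_permanent_le_l2_opNorm_pow {ι : Type*} [Fintype ι] [DecidableEq ι]
    (A : Matrix ι ι ℂ) : ‖A.permanent‖ ≤ ‖A‖ ^ Fintype.card ι := by
  set d := Fintype.card ι
  have hω := Complex.isPrimitiveRoot_exp (d + 1) d.succ_ne_zero
  set ω := Complex.exp (2 * Real.pi * Complex.I / (d + 1 : ℕ))
  have hterm : ∀ k : ι → Fin (d + 1),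
      ‖(∏ i, (A *ᵥ fun j => ω ^ (k j : ℕ)) i) / ∏ i, ω ^ (k i : ℕ)‖ ≤ ‖A‖ ^ d := by
    intro k
    have hunit : ∀ j, ‖ω ^ (k j : ℕ)‖ = 1 := fun j => by
      rw [norm_pow, hω.norm'_eq_one d.succ_ne_zero, one_pow]
    rw [norm_div, norm_prod univ (fun i => ω ^ (k i : ℕ)), Finset.prod_eq_one fun j _ => hunit j,
      div_one]
    exact A.norm_prod_mulVec_le _ hunit
  have hscaled : ((d + 1 : ℕ) : ℝ) ^ d * ‖A.permanent‖ ≤ ((d + 1 : ℕ) : ℝ) ^ d * ‖A‖ ^ d := by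
    calc ((d + 1 : ℕ) : ℝ) ^ d * ‖A.permanent‖
        = ‖∑ k : ι → Fin (d + 1),
            (∏ i, (A *ᵥ fun j => ω ^ (k j : ℕ)) i) / ∏ i, ω ^ (k i : ℕ)‖ := by
          rw [hω.sum_prod_mulVec_div_prod d.lt_succ_self, norm_mul, norm_pow, Complex.norm_natCast]
      _ ≤ ∑ k : ι → Fin (d + 1), ‖A‖ ^ d := norm_sum_le_of_le _ fun k _ => hterm k
      _ = ((d + 1 : ℕ) : ℝ) ^ d * ‖A‖ ^ d := by simp [d]
  exact le_of_mul_le_mul_left hscaled (by positivity)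

theorem perm_eq_permanent {n : ℕ} (A : Matrix (Fin n) (Fin n) ℂ) : perm A = A.permanent := by
  rw [← Matrix.permanent_transpose]
  rfl

theorem opNorm_eq_l2_opNorm {n : ℕ} (A : Matrix (Fin n) (Fin n) ℂ) : opNorm A = ‖A‖ := rfl

/-- Gurvits' bound: `|perm A| ≤ ‖A‖₂ ^ n`. -/
theorem perm_le_opNorm_pow {n : ℕ} (A : Matrix (Fin n) (Fin n) ℂ) :
    ‖perm A‖ ≤ opNorm A ^ n := by
  simpa [perm_eq_permanent, opNorm_eq_l2_opNorm] using A.norm_permanent_le_l2_opNorm_pow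
end

section
/- Let B be a b×n real matrix whose rows r_i satisfy ‖r_i‖₂ ≤ 1 and b_{i,i} ≥ 1−λ for some 0 < λ < 0.1 (with i ≤ b ≤ n). Let X be uniform on {-1,1}ⁿ. Then P(∃ i ≤ b such that sign((BX)_i) ≠ sign(X_i)) ≤ n·exp(−1/(5λ)); consequently P(‖BX‖₁ ≠ ∑_{i=1}^b X_i (BX)_i) ≤ n·e^{−1/(5λ)}. -/
open scoped Classical

/-!
Write row `i` as `r = r_k e_k + r'` with `k` the diagonal index. A sign mismatch at `i` forces
`X_k (r ⬝ X) ≤ 0`, i.e. `X_k (-r' ⬝ X) ≥ r_k ≥ 1 - λ`. Multiplying every coordinate `j ≠ k` by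
`X_k` is a bijection of the cube, so this event is exactly as likely as `-r' ⬝ X ≥ 1 - λ`, and
Hoeffding's inequality with `‖r'‖² ≤ 1 - (1 - λ)²` bounds it by `exp (-1 / (5λ))`. A union bound
over the rows gives the first claim; when all signs agree, `|(BX)_i| = X_i (BX)_i` termwise.
-/

open Finset Real Matrix

theorem Real.sign_eq_sign_of_mul_pos {x y : ℝ} (h : 0 < x * y) : sign x = sign y := by
  rcases pos_and_pos_or_neg_and_neg_of_mul_pos h with ⟨hx, hy⟩ | ⟨hx, hy⟩
  · rw [sign_of_pos hx, sign_of_pos hy]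
  · rw [sign_of_neg hx, sign_of_neg hy]

theorem Real.sign_mul_self_eq_abs (x : ℝ) : sign x * x = |x| := by
  rcases lt_trichotomy x 0 with hx | rfl | hx
  · rw [sign_of_neg hx, abs_of_neg hx, neg_one_mul]
  · simp
  · rw [sign_of_pos hx, abs_of_pos hx, one_mul]

section Xpm

variable {n : ℕ}

theorem Xpm_mul_self (ε : Fin n → Bool) (j : Fin n) : Xpm ε j * Xpm ε j = 1 := by
  unfold Xpm; split_ifs <;> norm_num

theorem sign_Xpm (ε : Fin n → Bool) (j : Fin n) : sign (Xpm ε j) = Xpm ε j := by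
  unfold Xpm; split_ifs
  · exact sign_one
  · rw [sign_neg, sign_one]

theorem sum_exp_dotProduct_Xpm (a : Fin n → ℝ) :
    ∑ ε : Fin n → Bool, exp (a ⬝ᵥ Xpm ε) = ∏ j, 2 * cosh (a j) := by
  have hcosh (j : Fin n) : 2 * cosh (a j) = ∑ c : Bool, exp (a j * if c then 1 else -1) := by
    rw [cosh_eq, Fintype.sum_bool]
    simp only [↓reduceIte, mul_one, Bool.false_eq_true, mul_neg]; ring
  simp_rw [hcosh, prod_univ_sum, Fintype.piFinset_univ, dotProduct, exp_sum, Xpm]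

theorem hoeffding_card_dotProduct_Xpm (a : Fin n → ℝ) {γ s : ℝ} (hγ : 0 ≤ γ) (hs : 0 < s)
    (ha : ∑ j, a j ^ 2 ≤ s) :
    (#{ε | γ ≤ a ⬝ᵥ Xpm ε} : ℝ) ≤ 2 ^ n * exp (-γ ^ 2 / (2 * s)) := by
  -- `t = γ / s` minimises `t ^ 2 * s / 2 - t * γ`.
  set t := γ / s
  have ht : 0 ≤ t := by positivity
  have hmarkov : (#{ε | γ ≤ a ⬝ᵥ Xpm ε} : ℝ) * exp (t * γ) ≤ 2 ^ n * exp (t ^ 2 * s / 2) :=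
    calc (#{ε | γ ≤ a ⬝ᵥ Xpm ε} : ℝ) * exp (t * γ)
        ≤ ∑ ε ∈ {ε | γ ≤ a ⬝ᵥ Xpm ε}, exp ((t • a) ⬝ᵥ Xpm ε) := by
          rw [← nsmul_eq_mul, ← sum_const]
          refine sum_le_sum fun ε hε ↦ exp_le_exp.2 ?_
          rw [smul_dotProduct, smul_eq_mul]
          exact mul_le_mul_of_nonneg_left (mem_filter.1 hε).2 ht
      _ ≤ ∑ ε, exp ((t • a) ⬝ᵥ Xpm ε) :=
          sum_le_sum_of_subset_of_nonneg (filter_subset _ _) fun _ _ _ ↦ (exp_pos _).le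
      _ = ∏ j, 2 * cosh (t * a j) := sum_exp_dotProduct_Xpm _
      _ ≤ ∏ j, 2 * exp ((t * a j) ^ 2 / 2) :=
          prod_le_prod (fun _ _ ↦ by positivity)
            fun j _ ↦ by gcongr; exact cosh_le_exp_half_sq _
      _ = 2 ^ n * exp (t ^ 2 / 2 * ∑ j, a j ^ 2) := by
          rw [prod_mul_distrib, prod_const, ← exp_sum, mul_sum, card_univ, Fintype.card_fin]
          exact congrArg (_ * exp ·) (sum_congr rfl fun j _ ↦ by ring)
      _ ≤ 2 ^ n * exp (t ^ 2 * s / 2) := by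
          gcongr; linarith [mul_le_mul_of_nonneg_left ha (by positivity : 0 ≤ t ^ 2 / 2)]
  have hexp : t ^ 2 * s / 2 - t * γ = -γ ^ 2 / (2 * s) := by
    simp only [t]; field_simp; ring
  rw [← hexp, exp_sub, mul_div_assoc', le_div_iff₀ (exp_pos _)]
  exact hmarkov

/-- As signs: multiplies every coordinate other than `k` by the `k`-th one. -/
def twistAt (k : Fin n) (ε : Fin n → Bool) : Fin n → Bool :=
  fun j ↦ if j = k then ε k else ε j == ε k

theorem twistAt_involutive (k : Fin n) : Function.Involutive (twistAt k) := by
  intro ε; funext j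
  by_cases hj : j = k
  · simp [twistAt, hj]
  · simp only [twistAt, hj, if_true, if_false]; cases ε j <;> cases ε k <;> rfl

theorem Xpm_twistAt_of_ne (ε : Fin n → Bool) {j k : Fin n} (hj : j ≠ k) :
    Xpm (twistAt k ε) j = Xpm ε k * Xpm ε j := by
  simp only [Xpm, twistAt, hj, if_false]; cases ε j <;> cases ε k <;> norm_num

theorem dotProduct_Xpm_twistAt {a : Fin n → ℝ} {k : Fin n} (ha : a k = 0) (ε : Fin n → Bool) :
    a ⬝ᵥ Xpm (twistAt k ε) = Xpm ε k * (a ⬝ᵥ Xpm ε) := by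
  simp only [dotProduct, mul_sum]
  refine sum_congr rfl fun j _ ↦ ?_
  by_cases hj : j = k
  · simp [hj, ha]
  · rw [Xpm_twistAt_of_ne ε hj]; ring

theorem card_le_Xpm_mul_dotProduct_eq {a : Fin n → ℝ} {k : Fin n} (ha : a k = 0) (γ : ℝ) :
    #{ε | γ ≤ Xpm ε k * (a ⬝ᵥ Xpm ε)} = #{ε | γ ≤ a ⬝ᵥ Xpm ε} :=
  card_equiv (twistAt_involutive k).toPerm fun ε ↦ by
    simp [dotProduct_Xpm_twistAt ha]

theorem card_sign_dotProduct_Xpm_ne_le {r : Fin n → ℝ} {k : Fin n} {lam : ℝ} (hlam0 : 0 < lam)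
    (hlam1 : lam ≤ 1) (hr : ∑ j, r j ^ 2 ≤ 1) (hk : 1 - lam ≤ r k) :
    (#{ε | sign (r ⬝ᵥ Xpm ε) ≠ sign (Xpm ε k)} : ℝ)
      ≤ 2 ^ n * exp (-(1 - lam) ^ 2 / (2 * (1 - (1 - lam) ^ 2))) := by
  set a := -Function.update r k 0
  have hak : a k = 0 := by simp [a]
  have hsplit (ε : Fin n → Bool) : Xpm ε k * (r ⬝ᵥ Xpm ε) = r k - Xpm ε k * (a ⬝ᵥ Xpm ε) := by
    have hr_eq : r = Function.update r k 0 + Pi.single k (r k) := by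
      funext j; by_cases hj : j = k <;> simp [hj]
    conv_lhs => rw [hr_eq, add_dotProduct, single_dotProduct]
    rw [neg_dotProduct]
    linear_combination r k * Xpm_mul_self ε k
  have hsub : ({ε | sign (r ⬝ᵥ Xpm ε) ≠ sign (Xpm ε k)} : Finset (Fin n → Bool))
      ⊆ ({ε | 1 - lam ≤ Xpm ε k * (a ⬝ᵥ Xpm ε)} : Finset (Fin n → Bool)) := by
    intro ε
    simp only [mem_filter, mem_univ, true_and]
    intro hne
    have hnonpos := not_lt.1 (mt sign_eq_sign_of_mul_pos (Ne.symm hne))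
    linarith [hsplit ε]
  have ha : ∑ j, a j ^ 2 ≤ 1 - (1 - lam) ^ 2 := by
    have hsq (j : Fin n) : a j ^ 2 = Function.update (fun j ↦ r j ^ 2) k 0 j := by
      by_cases hj : j = k <;> simp [a, hj]
    have : ∑ j, a j ^ 2 + r k ^ 2 = ∑ j, r j ^ 2 := by
      simp only [hsq, sum_update_of_mem (mem_univ k)]
      simp
    nlinarith
  calc (#{ε | sign (r ⬝ᵥ Xpm ε) ≠ sign (Xpm ε k)} : ℝ)
      ≤ #{ε | 1 - lam ≤ Xpm ε k * (a ⬝ᵥ Xpm ε)} := by exact_mod_cast card_le_card hsub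
    _ = #{ε | 1 - lam ≤ a ⬝ᵥ Xpm ε} := by rw [card_le_Xpm_mul_dotProduct_eq hak]
    _ ≤ _ := hoeffding_card_dotProduct_Xpm a (by linarith) (by nlinarith) ha

end Xpm

theorem neg_sq_div_le_neg_inv_five_mul {lam : ℝ} (hlam0 : 0 < lam) (hlam1 : lam ≤ 1 / 10) :
    -(1 - lam) ^ 2 / (2 * (1 - (1 - lam) ^ 2)) ≤ -1 / (5 * lam) := by
  rw [neg_div, neg_div, neg_le_neg_iff, div_le_div_iff₀ (by positivity) (by nlinarith)]
  nlinarith [mul_nonneg hlam0.le (by linarith : 0 ≤ 1 - 8 * lam), pow_pos hlam0 3]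

theorem abs_eq_Xpm_mul_of_sign_eq {n : ℕ} {ε : Fin n → Bool} {j : Fin n} {y : ℝ}
    (h : sign y = sign (Xpm ε j)) : |y| = Xpm ε j * y := by
  rw [← sign_mul_self_eq_abs, h, sign_Xpm]

theorem Finset.card_filter_exists_le {ι α : Type*} [Fintype ι] (s : Finset α) (p : ι → α → Prop)
    [∀ i, DecidablePred (p i)] [DecidablePred fun a ↦ ∃ i, p i a] :
    #{a ∈ s | ∃ i, p i a} ≤ ∑ i, #{a ∈ s | p i a} :=
  calc #{a ∈ s | ∃ i, p i a} ≤ #(univ.biUnion fun i ↦ {a ∈ s | p i a}) :=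
        card_le_card fun a ha ↦ by
          obtain ⟨has, i, hi⟩ := mem_filter.1 ha
          exact mem_biUnion.2 ⟨i, mem_univ _, mem_filter.2 ⟨has, hi⟩⟩
    _ ≤ _ := card_biUnion_le

/-- If each row of B is dominated by a diagonal entry of size at least `1 − λ`
(with rows of ℓ₂-norm at most 1 and `0 < λ < 0.1`), then with probability at least
`1 − n e^{−1/(5λ)}` every coordinate `(BX)_i` has the same sign as `X_i`; in
particular `‖BX‖₁ = ∑_{i≤b} X_i (BX)_i` except with probability `n e^{−1/(5λ)}`. -/
theorem sign_agreement_big_rows {b n : ℕ} (hbn : b ≤ n) (B : Matrix (Fin b) (Fin n) ℝ)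
    (lam : ℝ) (hlam0 : 0 < lam) (hlam1 : lam < 0.1)
    (hrow : ∀ i, Real.sqrt (∑ j, (B i j) ^ 2) ≤ 1)
    (hdiag : ∀ i, 1 - lam ≤ B i (Fin.castLE hbn i)) :
    (((Finset.univ.filter (fun ε : Fin n → Bool => ∃ i : Fin b,
          Real.sign ((B.mulVec (Xpm ε)) i) ≠ Real.sign (Xpm ε (Fin.castLE hbn i)))).card : ℝ)
        / 2 ^ n ≤ n * Real.exp (-1 / (5 * lam))) ∧
    (((Finset.univ.filter (fun ε : Fin n → Bool =>
          (∑ i : Fin b, |(B.mulVec (Xpm ε)) i|) ≠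
            ∑ i : Fin b, Xpm ε (Fin.castLE hbn i) * (B.mulVec (Xpm ε)) i)).card : ℝ)
        / 2 ^ n ≤ n * Real.exp (-1 / (5 * lam))) := by
  norm_num at hlam1
  set E := exp (-1 / (5 * lam))
  have hrowE (i : Fin b) :
      (#{ε | sign ((B *ᵥ Xpm ε) i) ≠ sign (Xpm ε (Fin.castLE hbn i))} : ℝ) ≤ 2 ^ n * E :=
    (card_sign_dotProduct_Xpm_ne_le hlam0 (by linarith) (sqrt_le_one.1 (hrow i)) (hdiag i)).trans
      (by gcongr; exact exp_le_exp.2 (neg_sq_div_le_neg_inv_five_mul hlam0 hlam1.le))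
  have hmismatch : (#{ε | ∃ i : Fin b,
      sign ((B *ᵥ Xpm ε) i) ≠ sign (Xpm ε (Fin.castLE hbn i))} : ℝ) / 2 ^ n ≤ n * E := by
    rw [div_le_iff₀ (by positivity)]
    calc (#{ε | ∃ i : Fin b, sign ((B *ᵥ Xpm ε) i) ≠ sign (Xpm ε (Fin.castLE hbn i))} : ℝ)
        ≤ ∑ i, (#{ε | sign ((B *ᵥ Xpm ε) i) ≠ sign (Xpm ε (Fin.castLE hbn i))} : ℝ) := by
          rw [← Nat.cast_sum]; exact Nat.cast_le.2 (card_filter_exists_le _ _)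
      _ ≤ ∑ _i : Fin b, 2 ^ n * E := sum_le_sum fun i _ ↦ hrowE i
      _ = b * E * 2 ^ n := by
          rw [sum_const, card_univ, Fintype.card_fin, nsmul_eq_mul]; ring
      _ ≤ n * E * 2 ^ n := by gcongr
  refine ⟨hmismatch, le_trans ?_ hmismatch⟩
  gcongr with ε
  contrapose!
  exact fun h ↦ sum_congr rfl fun i _ ↦ abs_eq_Xpm_mul_of_sign_eq (h i)
end

section
/- Let B be a b×n real matrix with rows of ℓ₂-norm at most 1, let X be uniform on {-1,1}ⁿ, and set Z = ∑_{i=1}^b X_i (BX)_i − ∑_{i=1}^b b_{i,i}. Then E[Z²] ≤ 4·∑_{i=1}^b (1 − b_{i,i}). -/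
lemma Xpm_sq {n : ℕ} (ε : Fin n → Bool) (k : Fin n) : Xpm ε k * Xpm ε k = 1 := by
  unfold Xpm; split_ifs <;> norm_num

lemma Xpm_flip_self {n : ℕ} (ε : Fin n → Bool) (k : Fin n) :
    Xpm (Function.update ε k (!ε k)) k = - Xpm ε k := by
  unfold Xpm; simp [Function.update_self]; cases ε k <;> simp

lemma Xpm_flip_ne {n : ℕ} (ε : Fin n → Bool) (k r : Fin n) (h : r ≠ k) :
    Xpm (Function.update ε k (!ε k)) r = Xpm ε r := by
  unfold Xpm; rw [Function.update_of_ne h]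

lemma sum_flip_zero {n : ℕ} (q : Fin n) (F : (Fin n → Bool) → ℝ)
    (h : ∀ ε, F (Function.update ε q (!ε q)) = - F ε) : ∑ ε : Fin n → Bool, F ε = 0 := by
  have hinv : Function.Involutive (fun ε : Fin n → Bool => Function.update ε q (!ε q)) := by
    intro ε
    simp [Function.update_idem, Function.update_self, Bool.not_not, Function.update_eq_self]
  have e : ∑ ε : Fin n → Bool, F ε
      = ∑ ε : Fin n → Bool, F (Function.update ε q (!ε q)) :=
    (Fintype.sum_equiv (hinv.toPerm _) _ _ (fun ε => rfl)).symm
  have : ∑ ε : Fin n → Bool, F ε + ∑ ε : Fin n → Bool, F ε = 0 := by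
    nth_rewrite 1 [e]
    rw [← Finset.sum_add_distrib]
    simp [h]
  linarith

lemma sum_four_zero {n : ℕ} (k l m p : Fin n) (hkl : k ≠ l) (hmp : m ≠ p)
    (h : ¬((k = m ∧ l = p) ∨ (k = p ∧ l = m))) :
    ∑ ε : Fin n → Bool, Xpm ε k * Xpm ε l * (Xpm ε m * Xpm ε p) = 0 := by
  push_neg at h
  by_cases hm : m = k
  · subst hm
    have hlp : l ≠ p := h.1 rfl
    apply sum_flip_zero l
    intro ε
    rw [Xpm_flip_self, Xpm_flip_ne _ _ _ hkl, Xpm_flip_ne _ _ _ hlp.symm]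
    ring
  · by_cases hp : p = k
    · subst hp
      have hlm : l ≠ m := h.2 rfl
      apply sum_flip_zero l
      intro ε
      rw [Xpm_flip_self, Xpm_flip_ne _ _ _ hkl, Xpm_flip_ne _ _ _ (Ne.symm hlm)]
      ring
    · apply sum_flip_zero k
      intro ε
      rw [Xpm_flip_self, Xpm_flip_ne _ _ _ (Ne.symm hkl), Xpm_flip_ne _ _ _ hm,
        Xpm_flip_ne _ _ _ hp]
      ring

lemma sum_four_same {n : ℕ} (k l m p : Fin n)
    (h : (k = m ∧ l = p) ∨ (k = p ∧ l = m)) :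
    ∑ ε : Fin n → Bool, Xpm ε k * Xpm ε l * (Xpm ε m * Xpm ε p) = 2 ^ n := by
  have key : ∀ ε : Fin n → Bool, Xpm ε k * Xpm ε l * (Xpm ε m * Xpm ε p) = 1 := by
    intro ε
    rcases h with ⟨h1, h2⟩ | ⟨h1, h2⟩ <;> subst h1 <;> subst h2
    · calc Xpm ε k * Xpm ε l * (Xpm ε k * Xpm ε l)
          = (Xpm ε k * Xpm ε k) * (Xpm ε l * Xpm ε l) := by ring
        _ = 1 := by rw [Xpm_sq, Xpm_sq, mul_one]
    · calc Xpm ε k * Xpm ε l * (Xpm ε l * Xpm ε k)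
          = (Xpm ε k * Xpm ε k) * (Xpm ε l * Xpm ε l) := by ring
        _ = 1 := by rw [Xpm_sq, Xpm_sq, mul_one]
  simp [key]

/-- Second-moment bound: for `Z = ∑_{i≤b} X_i (BX)_i − ∑_{i≤b} b_{i,i}` with X uniform
on `{-1,1}^n`, we have `E[Z²] ≤ 4 ∑_{i≤b} (1 − b_{i,i})`. -/
theorem variance_bound_big_rows {b n : ℕ} (hbn : b ≤ n) (B : Matrix (Fin b) (Fin n) ℝ)
    (hrow : ∀ i, Real.sqrt (∑ j, (B i j) ^ 2) ≤ 1) :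
    (∑ ε : Fin n → Bool,
        ((∑ i : Fin b, Xpm ε (Fin.castLE hbn i) * (B.mulVec (Xpm ε)) i) -
          ∑ i : Fin b, B i (Fin.castLE hbn i)) ^ 2) / 2 ^ n ≤
      4 * ∑ i : Fin b, (1 - B i (Fin.castLE hbn i)) := by
  classical
  have hc : Function.Injective (Fin.castLE hbn) := Fin.castLE_injective hbn
  set c : Fin b → Fin n := Fin.castLE hbn with hcdef
  set f : Fin b × Fin n → (Fin n → Bool) → ℝ :=
    fun p ε => if p.2 = c p.1 then 0 else B p.1 p.2 * (Xpm ε (c p.1) * Xpm ε p.2) with hf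
  -- Step A
  have hZ : ∀ ε : Fin n → Bool,
      (∑ i : Fin b, Xpm ε (c i) * (B.mulVec (Xpm ε)) i) - ∑ i : Fin b, B i (c i)
        = ∑ p : Fin b × Fin n, f p ε := by
    intro ε
    rw [Fintype.sum_prod_type, ← Finset.sum_sub_distrib]
    apply Finset.sum_congr rfl
    intro i _
    have hpt : ∀ j : Fin n, f (i, j) ε
        = Xpm ε (c i) * (B i j * Xpm ε j) - (if j = c i then B i (c i) else 0) := by
      intro j
      simp only [hf]
      by_cases hj : j = c i
      · subst hj
        simp only [eq_self_iff_true, if_true]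
        linear_combination (-(B i (c i))) * Xpm_sq ε (c i)
      · simp only [if_neg hj, sub_zero]
        ring
    rw [Finset.sum_congr rfl (fun j _ => hpt j), Finset.sum_sub_distrib]
    congr 1
    · simp [Matrix.mulVec, dotProduct, Finset.mul_sum]
    · simp
  -- Step B
  have hsq : ∑ ε : Fin n → Bool, (∑ p : Fin b × Fin n, f p ε) ^ 2
      = ∑ p : Fin b × Fin n, ∑ q : Fin b × Fin n, ∑ ε : Fin n → Bool, f p ε * f q ε := by
    simp_rw [sq, Fintype.sum_mul_sum]
    rw [Finset.sum_comm]
    exact Finset.sum_congr rfl fun p _ => Finset.sum_comm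
  set cond : Fin b × Fin n → Fin b × Fin n → Prop :=
    fun p q => p.2 ≠ c p.1 ∧ q.2 ≠ c q.1 ∧
      ((p.1 = q.1 ∧ p.2 = q.2) ∨ (p.2 = c q.1 ∧ q.2 = c p.1)) with hcond
  -- Step C
  have hC : ∀ p q : Fin b × Fin n, ∑ ε : Fin n → Bool, f p ε * f q ε
      = if cond p q then B p.1 p.2 * B q.1 q.2 * 2 ^ n else 0 := by
    intro p q
    by_cases hp : p.2 = c p.1
    · simp [hf, hp, hcond]
    · by_cases hq : q.2 = c q.1
      · simp [hf, hq, hcond]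
      · have hprod : ∀ ε, f p ε * f q ε
            = B p.1 p.2 * B q.1 q.2
              * (Xpm ε (c p.1) * Xpm ε p.2 * (Xpm ε (c q.1) * Xpm ε q.2)) := by
          intro ε; simp only [hf, if_neg hp, if_neg hq]; ring
        rw [Finset.sum_congr rfl (fun ε _ => hprod ε), ← Finset.mul_sum]
        by_cases hD : (p.1 = q.1 ∧ p.2 = q.2) ∨ (p.2 = c q.1 ∧ q.2 = c p.1)
        · have h4 : (c p.1 = c q.1 ∧ p.2 = q.2) ∨ (c p.1 = q.2 ∧ p.2 = c q.1) := by
            rcases hD with ⟨h1, h2⟩ | ⟨h1, h2⟩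
            · exact Or.inl ⟨congrArg c h1, h2⟩
            · exact Or.inr ⟨h2.symm, h1⟩
          rw [sum_four_same _ _ _ _ h4, if_pos ⟨hp, hq, hD⟩]
        · have h4 : ¬((c p.1 = c q.1 ∧ p.2 = q.2) ∨ (c p.1 = q.2 ∧ p.2 = c q.1)) := by
            intro hk; apply hD
            rcases hk with ⟨h1, h2⟩ | ⟨h1, h2⟩
            · exact Or.inl ⟨hc h1, h2⟩
            · exact Or.inr ⟨h2, h1.symm⟩
          rw [sum_four_zero _ _ _ _ (Ne.symm hp) (Ne.symm hq) h4, mul_zero, if_neg]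
          intro hcc; exact hD hcc.2.2
  -- symmetry of cond
  have hsym : ∀ p q, cond p q → cond q p := by
    rintro p q ⟨h1, h2, h3⟩
    refine ⟨h2, h1, ?_⟩
    rcases h3 with ⟨a1, a2⟩ | ⟨a1, a2⟩
    · exact Or.inl ⟨a1.symm, a2.symm⟩
    · exact Or.inr ⟨a2, a1⟩
  -- injective indicator sum
  have hinj_sum : ∀ (t : Fin n) (A : ℝ), 0 ≤ A →
      ∑ k : Fin b, (if c k = t then A else 0) ≤ A := by
    intro t A hA
    by_cases ht : ∃ k0, c k0 = t
    · obtain ⟨k0, hk0⟩ := ht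
      have he : ∀ k : Fin b, (if c k = t then A else 0) = if k = k0 then A else 0 := by
        intro k
        by_cases hk : k = k0
        · subst hk; rw [if_pos hk0, if_pos rfl]
        · rw [if_neg hk, if_neg]
          intro hck
          exact hk (hc (hck.trans hk0.symm))
      rw [Finset.sum_congr rfl (fun k _ => he k), Fintype.sum_ite_eq']
    · push_neg at ht
      have he : ∀ k : Fin b, (if c k = t then A else 0) = 0 := fun k => if_neg (ht k)
      rw [Finset.sum_congr rfl (fun k _ => he k), Finset.sum_const_zero]
      exact hA
  -- count bound
  have hcount : ∀ (p : Fin b × Fin n) (A : ℝ), 0 ≤ A →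
      ∑ q : Fin b × Fin n, (if cond p q then A else 0) ≤ 2 * A := by
    intro p A hA
    have hle : ∀ q : Fin b × Fin n, (if cond p q then A else 0)
        ≤ (if q = p then A else 0) + (if q.2 = c p.1 ∧ c q.1 = p.2 then A else 0) := by
      intro q
      by_cases hcq : cond p q
      · rw [if_pos hcq]
        rcases hcq.2.2 with ⟨h1, h2⟩ | ⟨h1, h2⟩
        · have hqp : q = p := Prod.ext h1.symm h2.symm
          rw [if_pos hqp]
          have : (0:ℝ) ≤ if q.2 = c p.1 ∧ c q.1 = p.2 then A else 0 := by positivity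
          linarith
        · have hcc : q.2 = c p.1 ∧ c q.1 = p.2 := ⟨h2, h1.symm⟩
          rw [if_pos hcc]
          have : (0:ℝ) ≤ if q = p then A else 0 := by positivity
          linarith
      · rw [if_neg hcq]; positivity
    have h2 : ∑ q : Fin b × Fin n, (if q.2 = c p.1 ∧ c q.1 = p.2 then A else 0) ≤ A := by
      rw [Fintype.sum_prod_type]
      have he : ∀ k : Fin b, ∑ l : Fin n, (if l = c p.1 ∧ c k = p.2 then A else 0)
          = if c k = p.2 then A else 0 := by
        intro k
        simp_rw [ite_and]
        rw [Fintype.sum_ite_eq']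
      rw [Finset.sum_congr rfl (fun k _ => he k)]
      exact hinj_sum _ _ hA
    calc ∑ q : Fin b × Fin n, (if cond p q then A else 0)
        ≤ ∑ q : Fin b × Fin n, ((if q = p then A else 0)
            + (if q.2 = c p.1 ∧ c q.1 = p.2 then A else 0)) :=
          Finset.sum_le_sum (fun q _ => hle q)
      _ = A + ∑ q : Fin b × Fin n, (if q.2 = c p.1 ∧ c q.1 = p.2 then A else 0) := by
          rw [Finset.sum_add_distrib, Fintype.sum_ite_eq']
      _ ≤ A + A := by linarith
      _ = 2 * A := by ring
  -- row norm facts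
  have hrs : ∀ i, ∑ j, B i j ^ 2 ≤ 1 := by
    intro i
    have h1 := hrow i
    have h2 : (0:ℝ) ≤ ∑ j, B i j ^ 2 := by positivity
    nlinarith [Real.sq_sqrt h2, Real.sqrt_nonneg (∑ j, B i j ^ 2)]
  have hd : ∀ i, B i (c i) ^ 2 ≤ ∑ j, B i j ^ 2 := fun i =>
    Finset.single_le_sum (f := fun j => B i j ^ 2) (fun j _ => sq_nonneg _)
      (Finset.mem_univ (c i))
  have hQ : (0:ℝ) < 2 ^ n := by positivity
  set g : (Fin b × Fin n) → (Fin b × Fin n) → ℝ :=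
    fun p q => if cond p q then (B p.1 p.2 ^ 2 / 2) * 2 ^ n else 0 with hg
  rw [div_le_iff₀ hQ]
  calc (∑ ε : Fin n → Bool,
        ((∑ i : Fin b, Xpm ε (c i) * (B.mulVec (Xpm ε)) i) - ∑ i : Fin b, B i (c i)) ^ 2)
      = ∑ ε : Fin n → Bool, (∑ p : Fin b × Fin n, f p ε) ^ 2 := by
        exact Finset.sum_congr rfl (fun ε _ => by rw [hZ ε])
    _ = ∑ p : Fin b × Fin n, ∑ q : Fin b × Fin n, ∑ ε : Fin n → Bool, f p ε * f q ε := hsq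
    _ = ∑ p : Fin b × Fin n, ∑ q : Fin b × Fin n,
          (if cond p q then B p.1 p.2 * B q.1 q.2 * 2 ^ n else 0) :=
        Finset.sum_congr rfl (fun p _ => Finset.sum_congr rfl (fun q _ => hC p q))
    _ ≤ ∑ p : Fin b × Fin n, ∑ q : Fin b × Fin n, (g p q + g q p) := by
        apply Finset.sum_le_sum; intro p _
        apply Finset.sum_le_sum; intro q _
        simp only [hg]
        by_cases hcq : cond p q
        · rw [if_pos hcq, if_pos hcq, if_pos (hsym p q hcq)]
          nlinarith [sq_nonneg (B p.1 p.2 - B q.1 q.2), hQ.le]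
        · rw [if_neg hcq, if_neg hcq, if_neg (fun h => hcq (hsym q p h))]
          norm_num
    _ = 2 * ∑ p : Fin b × Fin n, ∑ q : Fin b × Fin n, g p q := by
        simp_rw [Finset.sum_add_distrib]
        have : ∑ p : Fin b × Fin n, ∑ q : Fin b × Fin n, g q p
            = ∑ p : Fin b × Fin n, ∑ q : Fin b × Fin n, g p q := Finset.sum_comm
        rw [this]; ring
    _ ≤ 2 * ∑ p : Fin b × Fin n, (if p.2 ≠ c p.1 then B p.1 p.2 ^ 2 * 2 ^ n else 0) := by
        have hb2 : ∀ p : Fin b × Fin n, ∑ q : Fin b × Fin n, g p q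
            ≤ (if p.2 ≠ c p.1 then B p.1 p.2 ^ 2 * 2 ^ n else 0) := by
          intro p
          by_cases hp : p.2 = c p.1
          · have : ∀ q, g p q = 0 := by
              intro q; simp only [hg]
              exact if_neg (fun h => h.1 hp)
            rw [Finset.sum_congr rfl (fun q _ => this q), Finset.sum_const_zero,
              if_neg (fun h => h hp)]
          · rw [if_pos hp]
            have hA : (0:ℝ) ≤ B p.1 p.2 ^ 2 / 2 * 2 ^ n := by positivity
            have := hcount p _ hA
            simp only [hg]
            calc ∑ q : Fin b × Fin n, (if cond p q then B p.1 p.2 ^ 2 / 2 * 2 ^ n else 0)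
                ≤ 2 * (B p.1 p.2 ^ 2 / 2 * 2 ^ n) := this
              _ = B p.1 p.2 ^ 2 * 2 ^ n := by ring
        have := Finset.sum_le_sum (fun p (_ : p ∈ Finset.univ) => hb2 p)
        linarith
    _ = 2 * (2 ^ n * ∑ i : Fin b, (∑ j, B i j ^ 2 - B i (c i) ^ 2)) := by
        rw [Fintype.sum_prod_type]
        congr 1
        rw [Finset.mul_sum]
        apply Finset.sum_congr rfl
        intro i _
        have he : ∀ j : Fin n, (if j ≠ c i then B i j ^ 2 * 2 ^ n else 0)
            = B i j ^ 2 * 2 ^ n - (if j = c i then B i j ^ 2 * 2 ^ n else 0) := by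
          intro j; by_cases h : j = c i <;> simp [h]
        rw [Finset.sum_congr rfl (fun j _ => he j), Finset.sum_sub_distrib,
          Fintype.sum_ite_eq', ← Finset.sum_mul]
        ring
    _ ≤ (4 * ∑ i : Fin b, (1 - B i (c i))) * 2 ^ n := by
        have hper : ∀ i : Fin b, ∑ j, B i j ^ 2 - B i (c i) ^ 2 ≤ 2 * (1 - B i (c i)) := by
          intro i
          have h1 := hrs i
          have h2 := hd i
          nlinarith [sq_nonneg (1 - B i (c i))]
        have hsum := Finset.sum_le_sum (fun i (_ : i ∈ Finset.univ) => hper i)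
        rw [← Finset.mul_sum] at hsum
        nlinarith [hQ.le]
end
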